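/- For the wreath product ℤ ≀ ℤ with standard generating set S = {t, a₀}, there is a constant c > 0 such that the residual finiteness growth satisfies rf_{ℤ≀ℤ, S}(n) ≤ c·n² for all n ≥ 1. -/

import Mathlib

/-- The base group `⊕_{ℤ} ℤ` of `ℤ ≀ ℤ`, written multiplicatively. -/
abbrev Base := Multiplicative (ℤ →₀ ℤ)

/-- The shift automorphism of the base group of `ℤ ≀ ℤ`. -/
def shiftEquiv (k : ℤ) : (ℤ →₀ ℤ) ≃+ (ℤ →₀ ℤ) := Finsupp.domCongr (Equiv.addRight k)

/-- The shift action of `ℤ` on the base group of `ℤ ≀ ℤ`. -/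
noncomputable def shiftHom : Multiplicative ℤ →* MulAut Base :=
  MonoidHom.mk' (fun k => AddEquiv.toMultiplicative (shiftEquiv k.toAdd)) (by
    intro x y
    apply MulEquiv.ext
    intro fm
    apply Multiplicative.toAdd.injective
    ext b
    simp [shiftEquiv, Finsupp.domCongr_apply, Finsupp.equivMapDomain_apply,
      Equiv.Perm.mul_def, sub_sub]
    ring_nf)

/-- The wreath product `ℤ ≀ ℤ = (⊕_{ℤ} ℤ) ⋊ ℤ`. -/
abbrev W := SemidirectProduct Base (Multiplicative ℤ) shiftHom

/-- The generator `t` (the shift) of `ℤ ≀ ℤ`. -/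
noncomputable def tElt : W := SemidirectProduct.inr (Multiplicative.ofAdd 1)
/-- The generator `a₀` (the generator of the `0`-th coordinate) of `ℤ ≀ ℤ`. -/
noncomputable def aElt : W := SemidirectProduct.inl (Multiplicative.ofAdd (Finsupp.single 0 1))

/-!
Write `g = (f, k)` with `f ∈ ⊕_ℤ ℤ` a Laurent polynomial and `k` the exponent of `t`. A word of
length `≤ n` gives `|k| ≤ n`, and `f` supported in `[-n, n]` with coefficients in `[-n, n]`.
If `k ≠ 0`, then `g` survives in `ℤ/(n+1)`. If `k = 0`, take a prime `2n + 1 < p ≤ 4n + 2`: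
`f` stays nonzero mod `p`, and `X ^ n f(X)` has degree `≤ 2n < p - 1`, so `f(r) ≠ 0` for some
unit `r` of `ZMod p`. Letting `t` act by `x ↦ r x` and `a₀` by `x ↦ x + 1` maps `g` to the
nontrivial translation by `f(r)` in the affine group `ZMod p ⋊ (ZMod p)ˣ`, of order `< p²`.
-/

open Polynomial

section LaurentEval

variable {R : Type*} [CommRing R]

noncomputable def laurentEval (r : Rˣ) : (ℤ →₀ ℤ) →+ R :=
  Finsupp.liftAddHom fun i => zmultiplesHom R ↑(r ^ i)

lemma laurentEval_apply (r : Rˣ) (f : ℤ →₀ ℤ) :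
    laurentEval r f = f.sum fun i m => (m : R) * ↑(r ^ i) := by
  simp only [laurentEval, Finsupp.liftAddHom_apply]
  exact Finsupp.sum_congr fun i _ => zsmul_eq_mul _ _

lemma laurentEval_single (r : Rˣ) (i m : ℤ) :
    laurentEval r (Finsupp.single i m) = m * ↑(r ^ i) := by
  rw [laurentEval_apply, Finsupp.sum_single_index (by simp)]

lemma shiftEquiv_single (k i m : ℤ) :
    shiftEquiv k (Finsupp.single i m) = Finsupp.single (i + k) m :=
  Finsupp.equivMapDomain_single _ _ _

lemma laurentEval_shiftEquiv (r : Rˣ) (k : ℤ) (f : ℤ →₀ ℤ) :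
    laurentEval r (shiftEquiv k f) = ↑(r ^ k) * laurentEval r f := by
  induction f using Finsupp.induction_linear with
  | zero => simp
  | add f g hf hg => simp only [map_add, hf, hg, mul_add]
  | single i m =>
    rw [shiftEquiv_single, laurentEval_single, laurentEval_single, zpow_add, Units.val_mul]
    ring

end LaurentEval

instance SemidirectProduct.finite {N G : Type*} [Group N] [Group G] [Finite N] [Finite G]
    {φ : G →* MulAut N} : Finite (N ⋊[φ] G) :=
  Finite.of_equiv _ SemidirectProduct.equivProd.symm

section AffineGroup

variable (R : Type*) [CommRing R]

def affineAction : Rˣ →* MulAut (Multiplicative R) :=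
  MonoidHom.mk' (fun u => AddEquiv.toMultiplicative (DistribMulAction.toAddAut Rˣ R u))
    (fun u v => by ext x; simp [mul_smul])

abbrev Aff := Multiplicative R ⋊[affineAction R] Rˣ

variable {R}

noncomputable def toAff (r : Rˣ) : W →* Aff R :=
  SemidirectProduct.map (AddMonoidHom.toMultiplicative (laurentEval r)) (zpowersHom Rˣ r)
    (fun k => MonoidHom.ext fun f => congrArg Multiplicative.ofAdd
      (laurentEval_shiftEquiv r k.toAdd f.toAdd))

lemma toAff_inl (r : Rˣ) (b : Base) :
    toAff r (SemidirectProduct.inl b) =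
      SemidirectProduct.inl (Multiplicative.ofAdd (laurentEval r b.toAdd)) :=
  SemidirectProduct.map_inl _ _ _ _

lemma card_aff_zmod (p : ℕ) [Fact p.Prime] : Nat.card (Aff (ZMod p)) ≤ p ^ 2 := by
  rw [SemidirectProduct.card, Nat.card_eq_fintype_card, Fintype.card_multiplicative, ZMod.card,
    Nat.card_eq_fintype_card, ZMod.card_units, sq]
  exact Nat.mul_le_mul_left p (Nat.sub_le p 1)

end AffineGroup

section ShiftedPolynomial

variable (R : Type*) [CommRing R]

/-- `X ^ n * f(X)`, a polynomial when `f` has no terms below degree `-n`. -/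
noncomputable def shiftedPolynomial (n : ℕ) (f : ℤ →₀ ℤ) : R[X] :=
  ∑ i ∈ f.support, monomial (i + n).toNat (f i : R)

variable {R} {n : ℕ} {f : ℤ →₀ ℤ}

lemma eval_shiftedPolynomial (hf : ∀ i ∈ f.support, -(n : ℤ) ≤ i) (r : Rˣ) :
    (shiftedPolynomial R n f).eval ↑r = laurentEval r f * ↑r ^ n := by
  rw [shiftedPolynomial, eval_finsetSum, laurentEval_apply, Finsupp.sum, Finset.sum_mul]
  refine Finset.sum_congr rfl fun i hi => ?_
  have hpow : (r : R) ^ (i + n).toNat = ↑(r ^ i) * ↑r ^ n := by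
    rw [← Units.val_pow_eq_pow_val, ← Units.val_pow_eq_pow_val, ← Units.val_mul, ← zpow_natCast,
      ← zpow_natCast, ← zpow_add, Int.toNat_of_nonneg (by linarith [hf i hi])]
  rw [eval_monomial, hpow, mul_assoc]

lemma coeff_shiftedPolynomial (hf : ∀ i ∈ f.support, -(n : ℤ) ≤ i) (i : ℤ) (hi : i ∈ f.support) :
    (shiftedPolynomial R n f).coeff (i + n).toNat = f i := by
  rw [shiftedPolynomial, finsetSum_coeff, Finset.sum_eq_single i]
  · exact coeff_monomial_same _ _
  · intro j hj hji
    have hi' := hf i hi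
    have hj' := hf j hj
    exact coeff_monomial_of_ne _ (by omega)
  · exact fun h => absurd hi h

lemma natDegree_shiftedPolynomial_le (hf : ∀ i ∈ f.support, i ≤ n) :
    (shiftedPolynomial R n f).natDegree ≤ 2 * n :=
  natDegree_sum_le_of_forall_le _ _ fun i hi =>
    (natDegree_monomial_le _).trans (by have := hf i hi; omega)

end ShiftedPolynomial

theorem exists_laurentEval_ne_zero {K : Type*} [Field K] [Fintype Kˣ] {n : ℕ} {f : ℤ →₀ ℤ}
    (hf : ∀ i ∈ f.support, |i| ≤ n) (hcard : 2 * n < Fintype.card Kˣ)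
    {i₀ : ℤ} (hi₀ : (f i₀ : K) ≠ 0) : ∃ r : Kˣ, laurentEval r f ≠ 0 := by
  have hlow : ∀ i ∈ f.support, -(n : ℤ) ≤ i := fun i hi => (abs_le.mp (hf i hi)).1
  have hmem : i₀ ∈ f.support := Finsupp.mem_support_iff.mpr fun h => hi₀ (by simp [h])
  by_contra! hzero
  have hP : shiftedPolynomial K n f = 0 :=
    eq_zero_of_natDegree_lt_card_of_eval_eq_zero _ Units.val_injective
      (fun r => by rw [eval_shiftedPolynomial hlow, hzero, zero_mul])
      ((natDegree_shiftedPolynomial_le fun i hi => (abs_le.mp (hf i hi)).2).trans_lt hcard)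
  exact hi₀ (by rw [← coeff_shiftedPolynomial hlow i₀ hmem, hP, coeff_zero])

section WordBounds

def BoundedBy (m : ℕ) (g : W) : Prop :=
  |g.right.toAdd| ≤ m ∧ ∀ i ∈ g.left.toAdd.support, |i| ≤ m ∧ |g.left.toAdd i| ≤ m

lemma BoundedBy.mono {m m' : ℕ} {g : W} (h : BoundedBy m g) (hm : m ≤ m') : BoundedBy m' g := by
  have hm' : (m : ℤ) ≤ m' := by exact_mod_cast hm
  exact ⟨h.1.trans hm', fun i hi => ⟨(h.2 i hi).1.trans hm', (h.2 i hi).2.trans hm'⟩⟩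

lemma left_mul_apply (x y : W) (i : ℤ) :
    (x * y).left.toAdd i = x.left.toAdd i + y.left.toAdd (i - x.right.toAdd) := by
  show (x.left.toAdd + shiftEquiv x.right.toAdd y.left.toAdd) i = _
  simp [shiftEquiv, sub_eq_add_neg]

lemma right_mul_toAdd (x y : W) : (x * y).right.toAdd = x.right.toAdd + y.right.toAdd := rfl

lemma generator_components {x : W} (hx : x = tElt ∨ x = tElt⁻¹ ∨ x = aElt ∨ x = aElt⁻¹) :
    ∃ e s : ℤ, |e| ≤ 1 ∧ |s| ≤ 1 ∧ x.left.toAdd = Finsupp.single 0 e ∧ x.right.toAdd = s := by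
  rcases hx with rfl | rfl | rfl | rfl
  · exact ⟨0, 1, by norm_num, by norm_num, by simp [tElt], rfl⟩
  · exact ⟨0, -1, by norm_num, by norm_num, by simp [tElt], rfl⟩
  · exact ⟨1, 0, by norm_num, by norm_num, rfl, rfl⟩
  · exact ⟨-1, 0, by norm_num, by norm_num, by simp [aElt], rfl⟩

lemma BoundedBy.generator_mul {m : ℕ} {g x : W} (hg : BoundedBy m g)
    (hx : x = tElt ∨ x = tElt⁻¹ ∨ x = aElt ∨ x = aElt⁻¹) : BoundedBy (m + 1) (x * g) := by
  obtain ⟨e, s, he, hs, hxl, hxr⟩ := generator_components hx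
  simp only [BoundedBy, Nat.cast_add, Nat.cast_one]
  refine ⟨?_, fun i hi => ?_⟩
  · rw [right_mul_toAdd, hxr]
    linarith [abs_add_le s g.right.toAdd, hg.1]
  rw [Finsupp.mem_support_iff, left_mul_apply, hxl, hxr] at hi
  rw [left_mul_apply, hxl, hxr]
  by_cases hgi : g.left.toAdd (i - s) = 0
  · have hi0 : i = 0 := by
      by_contra h
      simp [Finsupp.single_eq_of_ne' (Ne.symm h), hgi] at hi
    subst hi0
    simp only [Finsupp.single_eq_same, hgi, add_zero, abs_zero]
    constructor <;> linarith
  · obtain ⟨hsupp, hval⟩ := hg.2 _ (Finsupp.mem_support_iff.mpr hgi)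
    have hsingle : |Finsupp.single 0 e i| ≤ 1 := by
      rcases eq_or_ne i 0 with rfl | h
      · simpa using he
      · simp [Finsupp.single_eq_of_ne' (Ne.symm h)]
    constructor
    · rw [abs_le] at hsupp hs ⊢; constructor <;> linarith
    · linarith [abs_add_le (Finsupp.single 0 e i) (g.left.toAdd (i - s))]

lemma boundedBy_list_prod (L : List W)
    (hL : ∀ x ∈ L, x = tElt ∨ x = tElt⁻¹ ∨ x = aElt ∨ x = aElt⁻¹) :
    BoundedBy L.length L.prod := by
  induction L with
  | nil => simp [BoundedBy]
  | cons x L ih =>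
    rw [List.prod_cons, List.length_cons]
    exact (ih fun y hy => hL y (List.mem_cons_of_mem _ hy)).generator_mul (hL x List.mem_cons_self)

end WordBounds

lemma Int.cast_zmod_ne_zero {p : ℕ} {m : ℤ} (hm : m ≠ 0) (hmp : |m| < p) : (m : ZMod p) ≠ 0 :=
  fun h => hm (Int.eq_zero_of_abs_lt_dvd ((ZMod.intCast_zmod_eq_zero_iff_dvd m p).mp h) hmp)

lemma MonoidHom.exists_normal_notMem_index_le {G Q : Type*} [Group G] [Group Q] [Finite Q]
    (φ : G →* Q) {g : G} (hg : φ g ≠ 1) {b : ℕ} (hb : Nat.card Q ≤ b) :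
    ∃ N : Subgroup G, N.Normal ∧ g ∉ N ∧ N.FiniteIndex ∧ N.index ≤ b := by
  have hindex : φ.ker.index ≤ Nat.card Q := by
    rw [Subgroup.index_ker]
    exact Nat.card_le_card_of_injective _ Subtype.val_injective
  exact ⟨φ.ker, inferInstance, fun h => hg h, ⟨φ.ker.index_ne_zero_of_finite⟩, hindex.trans hb⟩

noncomputable def exponentMod (n : ℕ) : W →* Multiplicative (ZMod (n + 1)) :=
  (AddMonoidHom.toMultiplicative (Int.castAddHom (ZMod (n + 1)))).comp
    SemidirectProduct.rightHom

lemma exponentMod_ne_one {n : ℕ} {g : W} (hg : BoundedBy n g) (hright : g.right ≠ 1) :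
    exponentMod n g ≠ 1 := by
  refine fun h => Int.cast_zmod_ne_zero (p := n + 1) (m := g.right.toAdd) hright ?_
    (congrArg Multiplicative.toAdd h)
  push_cast
  linarith [hg.1]

lemma exists_toAff_ne_one {p n : ℕ} [Fact p.Prime] (hnp : 2 * n + 1 < p) {g : W}
    (hg : BoundedBy n g) (hright : g.right = 1) (hne : g ≠ 1) :
    ∃ r : (ZMod p)ˣ, toAff r g ≠ 1 := by
  have hg_inl : g = SemidirectProduct.inl g.left := by
    conv_lhs => rw [← SemidirectProduct.inl_left_mul_inr_right g, hright, map_one, mul_one]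
  obtain ⟨i₀, hi₀⟩ : ∃ i, g.left.toAdd i ≠ 0 := by
    by_contra! h
    exact hne (hg_inl.trans (by rw [show g.left = 1 from Finsupp.ext h, map_one]))
  have hcard : 2 * n < Fintype.card (ZMod p)ˣ := by rw [ZMod.card_units]; omega
  have hcoeff : (g.left.toAdd i₀ : ZMod p) ≠ 0 := by
    have hbound := (hg.2 i₀ (Finsupp.mem_support_iff.mpr hi₀)).2
    exact Int.cast_zmod_ne_zero hi₀ (by omega)
  obtain ⟨r, hr⟩ := exists_laurentEval_ne_zero (fun i hi => (hg.2 i hi).1) hcard hcoeff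
  refine ⟨r, fun h => hr ?_⟩
  rw [hg_inl, toAff_inl] at h
  exact congrArg Multiplicative.toAdd (SemidirectProduct.inl_injective (h.trans (map_one _).symm))

/-- The residual finiteness growth of `ℤ ≀ ℤ` with respect to
`S = {t, a₀}` is at most `c·n²`: every nontrivial element of word norm at most `n`
survives in a finite quotient of order at most `c·n²`. -/
theorem stmt_3 : ∃ c : ℕ, 0 < c ∧ ∀ n : ℕ, 1 ≤ n → ∀ g : W, g ≠ 1 →
    (∃ L : List W, L.length ≤ n ∧
      (∀ x ∈ L, x = tElt ∨ x = tElt⁻¹ ∨ x = aElt ∨ x = aElt⁻¹) ∧ L.prod = g) →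
    ∃ N : Subgroup W, N.Normal ∧ g ∉ N ∧ N.FiniteIndex ∧ N.index ≤ c * n ^ 2 := by
  refine ⟨36, by norm_num, ?_⟩
  rintro n hn g hne ⟨L, hlen, hgen, rfl⟩
  have hg : BoundedBy n L.prod := (boundedBy_list_prod L hgen).mono hlen
  by_cases hright : L.prod.right = 1
  · obtain ⟨p, hp, hnp, hpn⟩ := Nat.exists_prime_lt_and_le_two_mul (2 * n + 1) (by omega)
    have : Fact p.Prime := ⟨hp⟩
    obtain ⟨r, hr⟩ := exists_toAff_ne_one hnp hg hright hne
    refine (toAff r).exists_normal_notMem_index_le hr ((card_aff_zmod p).trans ?_)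
    calc p ^ 2 ≤ (2 * (2 * n + 1)) ^ 2 := Nat.pow_le_pow_left hpn 2
      _ ≤ 36 * n ^ 2 := by nlinarith
  · refine (exponentMod n).exists_normal_notMem_index_le (exponentMod_ne_one hg hright) ?_
    rw [Nat.card_eq_fintype_card, Fintype.card_multiplicative, ZMod.card]
    nlinarith
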